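/- For every open J ⊆ ℝ and names ρ, σ, τ: if J ⊩ ρ = σ and J ⊩ σ = τ, then J ⊩ ρ = τ. -/

import Mathlib

/-- Names over ℝ: a name is a family of pairs of a name and an open set of reals. -/
inductive Name : Type 1
  | mk (ι : Type) (elem : ι → Name) (cond : ι → Set ℝ) (hopen : ∀ i, IsOpen (cond i)) : Name

namespace Name

/-- The index type of the family of pairs of a name. -/
def idx : Name → Type
  | mk ι _ _ _ => ι

/-- The name component of the `i`-th pair. -/
def elem : (σ : Name) → σ.idx → Name
  | mk _ e _ _ => e

/-- The open-set component of the `i`-th pair. -/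
def cond : (σ : Name) → σ.idx → Set ℝ
  | mk _ _ c _ => c

theorem cond_isOpen : ∀ (σ : Name) (i : σ.idx), IsOpen (σ.cond i)
  | mk _ _ _ h => h

/-- Rank of a name, used for the recursive definition of forcing. -/
noncomputable def rank : Name → Ordinal.{0}
  | mk _ e _ _ => Ordinal.lsub fun i => rank (e i)

theorem rank_elem_lt : ∀ (σ : Name) (i : σ.idx), (σ.elem i).rank < σ.rank
  | mk ι e c h, i => by
    simpa [rank, elem] using Ordinal.lt_lsub (fun i => rank (e i)) i

theorem lex_max_min_lt {a a' b : Ordinal.{0}} (h : a' < a) :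
    Prod.Lex (· < ·) (· < ·) (max a' b, min a' b) (max a b, min a b) := by
  rcases le_or_gt a b with hab | hab
  · rw [max_eq_right hab, max_eq_right (h.le.trans hab), min_eq_left hab,
      min_eq_left (h.le.trans hab)]
    exact Prod.Lex.right _ h
  · rw [max_eq_left hab.le]
    exact Prod.Lex.left _ _ (max_lt h hab)

mutual
  /-- `feq σ τ J` means `J ⊩ σ = τ`. -/
  def feq (σ τ : Name) (J : Set ℝ) : Prop :=
    (∀ i : σ.idx, fmem (σ.elem i) τ (J ∩ σ.cond i)) ∧
    (∀ j : τ.idx, fmem (τ.elem j) σ (J ∩ τ.cond j))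
  termination_by (max σ.rank τ.rank, min σ.rank τ.rank)
  decreasing_by
    · exact lex_max_min_lt (rank_elem_lt σ i)
    · rw [max_comm σ.rank, min_comm σ.rank]
      exact lex_max_min_lt (rank_elem_lt τ j)

  /-- `fmem σ τ J` means `J ⊩ σ ∈ τ`. -/
  def fmem (σ τ : Name) (J : Set ℝ) : Prop :=
    ∀ r ∈ J, ∃ (j : τ.idx) (J' : Set ℝ), IsOpen J' ∧ r ∈ J' ∩ τ.cond j ∧
      feq σ (τ.elem j) (J' ∩ τ.cond j)
  termination_by (max σ.rank τ.rank, min σ.rank τ.rank)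
  decreasing_by
    rw [max_comm σ.rank, min_comm σ.rank, max_comm σ.rank, min_comm σ.rank]
    exact lex_max_min_lt (rank_elem_lt τ j)
end

end Name

/-!
Induction on `ρ`. To force `ρᵢ ∈ τ` near a point `r`, first find a pair `⟨σⱼ, Jⱼ⟩` of `σ`
with `ρᵢ = σⱼ` forced near `r`, then a pair `⟨τₖ, Jₖ⟩` of `τ` with `σⱼ = τₖ` forced near `r`;
on the intersection of these neighbourhoods the induction hypothesis for `ρᵢ` gives `ρᵢ = τₖ`.
The other half, `τₖ ∈ ρ`, is the same argument run through the symmetry of `⊩ · = ·`.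
-/

namespace Name

theorem fmem_mono {σ τ : Name} {J K : Set ℝ} (hKJ : K ⊆ J) (h : fmem σ τ J) :
    fmem σ τ K := by
  rw [fmem] at h ⊢
  exact fun r hr => h r (hKJ hr)

theorem feq_mono {σ τ : Name} {J K : Set ℝ} (hKJ : K ⊆ J) (h : feq σ τ J) :
    feq σ τ K := by
  rw [feq] at h ⊢
  exact ⟨fun i => fmem_mono (Set.inter_subset_inter_left _ hKJ) (h.1 i),
    fun j => fmem_mono (Set.inter_subset_inter_left _ hKJ) (h.2 j)⟩

theorem feq_symm {σ τ : Name} {J : Set ℝ} (h : feq σ τ J) : feq τ σ J := by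
  rw [feq] at h ⊢
  exact h.symm

theorem fmem_of_feq_left {σ τ : Name} {J : Set ℝ} (h : feq σ τ J) (i : σ.idx) :
    fmem (σ.elem i) τ (J ∩ σ.cond i) := by
  rw [feq] at h
  exact h.1 i

theorem fmem_of_feq_right {σ τ : Name} {J : Set ℝ} (h : feq σ τ J) (j : τ.idx) :
    fmem (τ.elem j) σ (J ∩ τ.cond j) :=
  fmem_of_feq_left (feq_symm h) j

theorem fmem_of_fmem_of_feq {x σ τ : Name} {K : Set ℝ}
    (trans : ∀ j k L, feq x (σ.elem j) L → feq (σ.elem j) (τ.elem k) L → feq x (τ.elem k) L)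
    (hx : fmem x σ K) (hστ : feq σ τ K) : fmem x τ K := by
  rw [fmem] at hx ⊢
  intro r hr
  obtain ⟨j, J₁, hJ₁, ⟨hrJ₁, hrj⟩, hxj⟩ := hx r hr
  have hj := fmem_of_feq_left hστ j
  rw [fmem] at hj
  obtain ⟨k, J₂, hJ₂, ⟨hrJ₂, hrk⟩, hjk⟩ := hj r ⟨hr, hrj⟩
  refine ⟨k, J₁ ∩ σ.cond j ∩ J₂, (hJ₁.inter (σ.cond_isOpen j)).inter hJ₂,
    ⟨⟨⟨hrJ₁, hrj⟩, hrJ₂⟩, hrk⟩, trans j k _ (feq_mono ?_ hxj) (feq_mono ?_ hjk)⟩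
  · exact fun y hy => hy.1.1
  · exact fun y hy => ⟨hy.1.2, hy.2⟩

theorem feq_trans {ρ σ τ : Name} {J : Set ℝ} (h₁ : feq ρ σ J) (h₂ : feq σ τ J) :
    feq ρ τ J := by
  induction ρ generalizing σ τ J with
  | mk _ _ _ _ ih =>
    rw [feq]
    constructor
    · intro i
      exact fmem_of_fmem_of_feq (fun _ _ _ => ih i) (fmem_of_feq_left h₁ i)
        (feq_mono Set.inter_subset_left h₂)
    · intro k
      exact fmem_of_fmem_of_feq
        (fun _ i _ hkj hji => feq_symm (ih i (feq_symm hji) (feq_symm hkj)))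
        (fmem_of_feq_right h₂ k) (feq_mono Set.inter_subset_left (feq_symm h₁))

end Name

theorem forces_eq_trans (J : Set ℝ) (hJ : IsOpen J) (ρ σ τ : Name)
    (h₁ : Name.feq ρ σ J) (h₂ : Name.feq σ τ J) : Name.feq ρ τ J :=
  Name.feq_trans h₁ h₂
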